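/- Let a ∈ ℝ^N, let D = diag(a) be the N×N diagonal matrix with diagonal entries a, and let k be an integer with 1 ≤ k ≤ N. Then the maximum of tr(XᵀDX) over all X ∈ ℝ^{N×k} with XᵀX = I_k is attained and equals the sum of the k largest entries of a. -/

import Mathlib

/-!
Write `t i = ∑ⱼ X i j ^ 2` for the squared row norms of `X`. Then `tr (Xᵀ D X) = ∑ᵢ a i * t i`,
and orthonormality of the columns gives `∑ᵢ t i = k` (Frobenius norm) and `t i ≤ 1` (diagonal
entries of the orthogonal projection `X Xᵀ`). Over this polytope the linear form `∑ a i t i`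
is maximised by the indicator of a set of `k` largest entries of `a`, which is the image of an
injection `φ` maximising `∑ a ∘ φ`; selecting the columns `φ` of the identity attains the bound.
-/

open Finset Matrix

section FractionalSelection

variable {ι : Type*} [Fintype ι]

theorem exists_threshold_of_exchange (a : ι → ℝ) (S : Finset ι)
    (hexch : ∀ i ∈ S, ∀ j ∉ S, a j ≤ a i) :
    ∃ θ, (∀ i ∈ S, θ ≤ a i) ∧ ∀ j ∉ S, a j ≤ θ := by
  rcases S.eq_empty_or_nonempty with rfl | hS
  · obtain ⟨θ, hθ⟩ := (Set.finite_range a).bddAbove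
    exact ⟨θ, by simp, fun j _ => hθ ⟨j, rfl⟩⟩
  · exact ⟨S.inf' hS a, fun i hi => inf'_le a hi,
      fun j hj => le_inf' hS a fun i hi => hexch i hi j hj⟩

theorem sum_mul_le_sum_of_exchange (a t : ι → ℝ) (S : Finset ι)
    (hexch : ∀ i ∈ S, ∀ j ∉ S, a j ≤ a i)
    (ht₀ : ∀ i, 0 ≤ t i) (ht₁ : ∀ i, t i ≤ 1) (ht : ∑ i, t i = #S) :
    ∑ i, a i * t i ≤ ∑ i ∈ S, a i := by
  classical
  obtain ⟨θ, haS, haSc⟩ := exists_threshold_of_exchange a S hexch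
  set s : ι → ℝ := fun i => if i ∈ S then 1 else 0
  have hs : ∑ i ∈ S, a i = ∑ i, a i * s i := by simp [s, sum_ite_mem]
  have hs_sum : ∑ i, s i = #S := by simp [s]
  -- `t - s` is `≤ 0` on `S`, where `a ≥ θ`, and `≥ 0` off `S`, where `a ≤ θ`
  have hpos : ∀ i, (a i - θ) * (t i - s i) ≤ 0 := by
    intro i
    by_cases hi : i ∈ S
    · simp only [s, if_pos hi]
      exact mul_nonpos_of_nonneg_of_nonpos (by linarith [haS i hi]) (by linarith [ht₁ i])
    · simp only [s, if_neg hi]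
      exact mul_nonpos_of_nonpos_of_nonneg (by linarith [haSc i hi]) (by linarith [ht₀ i])
  have hdiff : ∑ i, a i * t i - ∑ i, a i * s i =
      ∑ i, (a i - θ) * (t i - s i) + θ * (∑ i, t i - ∑ i, s i) := by
    simp only [sub_mul, mul_sub, sum_sub_distrib, mul_sum]
    ring
  have := sum_nonpos fun i (_ : i ∈ univ) => hpos i
  rw [ht, hs_sum, sub_self, mul_zero, add_zero] at hdiff
  linarith

end FractionalSelection

section Embeddings

variable {κ ι : Type*} [Fintype κ]

theorem exists_embedding_forall_sum_le [Fintype ι] (a : ι → ℝ)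
    (h : Fintype.card κ ≤ Fintype.card ι) :
    ∃ φ : κ ↪ ι, ∀ ψ : κ ↪ ι, ∑ j, a (ψ j) ≤ ∑ j, a (φ j) := by
  classical
  have := Function.Embedding.nonempty_of_card_le h
  obtain ⟨φ, -, hφ⟩ := exists_max_image univ (fun φ : κ ↪ ι => ∑ j, a (φ j)) univ_nonempty
  exact ⟨φ, fun ψ => hφ ψ (mem_univ ψ)⟩

theorem le_apply_of_notMem_range_of_forall_sum_le {a : ι → ℝ} {φ : κ ↪ ι}
    (hφ : ∀ ψ : κ ↪ ι, ∑ j, a (ψ j) ≤ ∑ j, a (φ j)) {i : ι} (hi : i ∉ Set.range φ) (l : κ) :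
    a i ≤ a (φ l) := by
  classical
  have hψ : ⇑(φ.setValue l i) = Function.update φ l i := by
    funext j
    by_cases hj : j = l
    · subst hj; simp [Function.Embedding.setValue_eq]
    · rw [Function.update_of_ne hj,
        Function.Embedding.setValue_eq_of_ne hj fun h => hi ⟨j, h⟩]
  have hsum : ∑ j, a (φ.setValue l i j) = a i + ∑ j ∈ univ \ {l}, a (φ j) := by
    have := sum_update_of_mem (mem_univ l) (a ∘ φ) (a i)
    rwa [← Function.comp_update, ← hψ] at this
  have := hφ (φ.setValue l i)
  rw [hsum, ← add_sum_erase univ _ (mem_univ l), sdiff_singleton_eq_erase] at this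
  linarith

end Embeddings

section OrthonormalColumns

variable {ι κ : Type*} [Fintype ι] [Fintype κ]

theorem trace_transpose_mul_diagonal_mul [DecidableEq ι] (a : ι → ℝ) (X : Matrix ι κ ℝ) :
    (Xᵀ * diagonal a * X).trace = ∑ i, a i * ∑ j, X i j ^ 2 := by
  simp only [trace, diag_apply, mul_apply, transpose_apply, diagonal_apply, mul_ite, mul_zero,
    sum_ite_eq', mem_univ, if_true, mul_sum]
  rw [sum_comm]
  exact sum_congr rfl fun i _ => sum_congr rfl fun j _ => by ring

theorem sum_sum_sq_eq_card_of_transpose_mul_self_eq_one [DecidableEq κ] {X : Matrix ι κ ℝ}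
    (hX : Xᵀ * X = 1) : ∑ i, ∑ j, X i j ^ 2 = Fintype.card κ := by
  have := congrArg trace hX
  rw [trace_one] at this
  rw [← this, sum_comm]
  simp only [trace, diag_apply, mul_apply, transpose_apply, sq]

theorem diag_le_one_of_transpose_eq_of_mul_self_eq {P : Matrix ι ι ℝ} (hP : Pᵀ = P)
    (hPP : P * P = P) (i : ι) : P i i ≤ 1 := by
  have hsq : P i i = ∑ j, P i j ^ 2 := by
    conv_lhs => rw [← hPP]
    refine sum_congr rfl fun j _ => ?_
    have hji : P j i = P i j := by simpa using congrFun (congrFun hP i) j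
    show P i j * P j i = P i j ^ 2
    rw [hji, sq]
  have : P i i ^ 2 ≤ P i i := hsq ▸ single_le_sum (f := fun j => P i j ^ 2)
    (fun j _ => sq_nonneg _) (mem_univ i)
  nlinarith [sq_nonneg (P i i)]

theorem sum_sq_le_one_of_transpose_mul_self_eq_one [DecidableEq κ] {X : Matrix ι κ ℝ}
    (hX : Xᵀ * X = 1) (i : ι) : ∑ j, X i j ^ 2 ≤ 1 := by
  have hP : (X * Xᵀ) * (X * Xᵀ) = X * Xᵀ := by
    rw [Matrix.mul_assoc, ← Matrix.mul_assoc Xᵀ, hX, Matrix.one_mul]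
  have := diag_le_one_of_transpose_eq_of_mul_self_eq (by simp) hP i
  simpa only [mul_apply, transpose_apply, sq] using this

end OrthonormalColumns

theorem transpose_mul_mul_submatrix_one {ι κ R : Type*} [Fintype ι] [DecidableEq ι]
    [Semiring R] (M : Matrix ι ι R) (φ : κ → ι) :
    ((1 : Matrix ι ι R).submatrix id φ)ᵀ * M * (1 : Matrix ι ι R).submatrix id φ =
      M.submatrix φ φ := by
  rw [transpose_submatrix, transpose_one]
  have h1 := one_submatrix_mul φ (Equiv.refl ι) M
  have h2 := mul_submatrix_one (Equiv.refl ι) φ (M.submatrix φ id)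
  simp only [Equiv.refl_symm, Equiv.coe_refl, Function.id_comp] at h1 h2
  rw [h1, h2, submatrix_submatrix]
  rfl

theorem stmt_14_general (N k : ℕ) (a : Fin N → ℝ) (hk2 : k ≤ N) :
    ∃ m : ℝ,
      IsGreatest {s : ℝ | ∃ φ : Fin k → Fin N, Function.Injective φ ∧
          s = ∑ j : Fin k, a (φ j)} m ∧
      IsGreatest {v : ℝ | ∃ X : Matrix (Fin N) (Fin k) ℝ,
          Xᵀ * X = 1 ∧ v = (Xᵀ * Matrix.diagonal a * X).trace} m := by
  obtain ⟨φ, hφ⟩ := exists_embedding_forall_sum_le (κ := Fin k) a (by simpa using hk2)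
  refine ⟨∑ j, a (φ j), ⟨⟨φ, φ.injective, rfl⟩, ?_⟩, ⟨?_, ?_⟩⟩
  · rintro s ⟨ψ, hψ, rfl⟩
    exact hφ ⟨ψ, hψ⟩
  · refine ⟨(1 : Matrix (Fin N) (Fin N) ℝ).submatrix id φ, ?_, ?_⟩
    · rw [← Matrix.mul_one (_ᵀ), transpose_mul_mul_submatrix_one, submatrix_one_embedding]
    · rw [transpose_mul_mul_submatrix_one, submatrix_diagonal_embedding, trace_diagonal]
      rfl
  · rintro v ⟨X, hX, rfl⟩
    rw [trace_transpose_mul_diagonal_mul, ← sum_map univ φ]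
    refine sum_mul_le_sum_of_exchange a _ _ ?_ (fun i => sum_nonneg fun j _ => sq_nonneg _)
      (sum_sq_le_one_of_transpose_mul_self_eq_one hX) ?_
    · intro i hi j hj
      obtain ⟨l, -, rfl⟩ := mem_map.mp hi
      exact le_apply_of_notMem_range_of_forall_sum_le hφ (by simpa using hj) l
    · simp [sum_sum_sq_eq_card_of_transpose_mul_self_eq_one hX]

/-- The maximum of `tr (Xᵀ D X)` over all `X ∈ ℝ^{N×k}` with
orthonormal columns, where `D = diag a`, is attained and equals the sum of
the `k` largest entries of `a`. -/
theorem stmt_14 (N k : ℕ) (a : Fin N → ℝ) (hk1 : 1 ≤ k) (hk2 : k ≤ N) :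
    ∃ m : ℝ,
      IsGreatest {s : ℝ | ∃ φ : Fin k → Fin N, Function.Injective φ ∧
          s = ∑ j : Fin k, a (φ j)} m ∧
      IsGreatest {v : ℝ | ∃ X : Matrix (Fin N) (Fin k) ℝ,
          Xᵀ * X = 1 ∧ v = (Xᵀ * Matrix.diagonal a * X).trace} m :=
  stmt_14_general N k a hk2
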